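/- arXiv:2008.00883 — 2 statements merged into one kernel-verified Lean document; each statement's English description precedes it below -/
import Mathlib

section
/- Let Ω ⊂ ℝⁿ be a bounded open set, f ∈ C(∂Ω), and suppose u is bounded and A-harmonic in Ω with lim_{Ω∋y→x} u(y) = f(x) for all x ∈ ∂Ω outside a set E ⊂ ∂Ω of (p,w)-capacity zero. Then u = Pf in Ω, where Pf is the Perron solution of f. -/
open Set Filter Topology

variable {n : ℕ}

/-- The upper class `U_f`: `A`-superharmonic functions in `Ω` (predicate `ASuper`),
bounded from below, with `liminf` at every boundary point at least `f`. -/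
def upperClass (Ω : Set (EuclideanSpace ℝ (Fin n)))
    (ASuper : (EuclideanSpace ℝ (Fin n) → EReal) → Prop)
    (f : EuclideanSpace ℝ (Fin n) → EReal) :
    Set (EuclideanSpace ℝ (Fin n) → EReal) :=
  {u | ASuper u ∧ (∃ c : ℝ, ∀ x ∈ Ω, (c : EReal) ≤ u x) ∧
    ∀ x ∈ frontier Ω, f x ≤ Filter.liminf u (nhdsWithin x Ω)}

/-- The upper Perron solution `P̄f`. -/
noncomputable def upperPerron (Ω : Set (EuclideanSpace ℝ (Fin n)))
    (ASuper : (EuclideanSpace ℝ (Fin n) → EReal) → Prop)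
    (f : EuclideanSpace ℝ (Fin n) → EReal) : EuclideanSpace ℝ (Fin n) → EReal :=
  fun x => ⨅ u ∈ upperClass Ω ASuper f, u x

/-- The lower class `L_f`: `A`-subharmonic functions in `Ω` (predicate `ASub`),
bounded from above, with `limsup` at every boundary point at most `f`. -/
def lowerClass (Ω : Set (EuclideanSpace ℝ (Fin n)))
    (ASub : (EuclideanSpace ℝ (Fin n) → EReal) → Prop)
    (f : EuclideanSpace ℝ (Fin n) → EReal) :
    Set (EuclideanSpace ℝ (Fin n) → EReal) :=
  {u | ASub u ∧ (∃ c : ℝ, ∀ x ∈ Ω, u x ≤ (c : EReal)) ∧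
    ∀ x ∈ frontier Ω, Filter.limsup u (nhdsWithin x Ω) ≤ f x}

/-- The lower Perron solution `ŝPf`. -/
noncomputable def lowerPerron (Ω : Set (EuclideanSpace ℝ (Fin n)))
    (ASub : (EuclideanSpace ℝ (Fin n) → EReal) → Prop)
    (f : EuclideanSpace ℝ (Fin n) → EReal) : EuclideanSpace ℝ (Fin n) → EReal :=
  fun x => ⨆ u ∈ lowerClass Ω ASub f, u x

/-- `f` is resolutive: the upper and lower Perron solutions coincide in `Ω`
and are `A`-harmonic there (predicate `AHarm` on real-valued functions). -/
def Resolutive (Ω : Set (EuclideanSpace ℝ (Fin n)))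
    (ASuper ASub : (EuclideanSpace ℝ (Fin n) → EReal) → Prop)
    (AHarm : (EuclideanSpace ℝ (Fin n) → ℝ) → Prop)
    (f : EuclideanSpace ℝ (Fin n) → EReal) : Prop :=
  (∀ x ∈ Ω, upperPerron Ω ASuper f x = lowerPerron Ω ASub f x) ∧
  ∃ v : EuclideanSpace ℝ (Fin n) → ℝ, AHarm v ∧
    ∀ x ∈ Ω, upperPerron Ω ASuper f x = (v x : EReal)

/-- Corollary 3.12: if `f ∈ C(∂Ω)` and `u` is a bounded `A`-harmonic function in
the bounded open set `Ω` whose boundary limits equal `f` outside a set `E ⊆ ∂Ω`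
of `(p,w)`-capacity zero, then `u = Pf` in `Ω`. The resolutivity and invariance
theorem (`hres`) and the comparison principle (`hcomp`) are assumed, as well as
the fact that `A`-harmonic functions are both `A`-super- and `A`-subharmonic. -/
theorem stmt_3 (Ω : Set (EuclideanSpace ℝ (Fin n)))
    (hΩo : IsOpen Ω) (hΩb : Bornology.IsBounded Ω) (hΩne : Ω.Nonempty)
    (ASuper ASub : (EuclideanSpace ℝ (Fin n) → EReal) → Prop)
    (AHarm : (EuclideanSpace ℝ (Fin n) → ℝ) → Prop)
    (Cpw : Set (EuclideanSpace ℝ (Fin n)) → ENNReal)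
    (hAHsupersub : ∀ v : EuclideanSpace ℝ (Fin n) → ℝ, AHarm v →
      ASuper (fun x => (v x : EReal)) ∧ ASub (fun x => (v x : EReal)))
    -- the resolutivity and invariance theorem for continuous boundary data
    (hres : ∀ (g : EuclideanSpace ℝ (Fin n) → ℝ), ContinuousOn g (frontier Ω) →
      ∀ h : EuclideanSpace ℝ (Fin n) → EReal,
        Cpw {x ∈ frontier Ω | h x ≠ 0} = 0 →
        Resolutive Ω ASuper ASub AHarm (fun x => (g x : EReal)) ∧
        Resolutive Ω ASuper ASub AHarm (fun x => (g x : EReal) + h x) ∧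
        ∀ x ∈ Ω, upperPerron Ω ASuper (fun y => (g y : EReal) + h y) x
          = upperPerron Ω ASuper (fun y => (g y : EReal)) x)
    -- comparison principle
    (hcomp : ∀ (g : EuclideanSpace ℝ (Fin n) → EReal) (x : EuclideanSpace ℝ (Fin n)),
      x ∈ Ω → lowerPerron Ω ASub g x ≤ upperPerron Ω ASuper g x)
    (f : EuclideanSpace ℝ (Fin n) → ℝ) (hf : ContinuousOn f (frontier Ω))
    (u : EuclideanSpace ℝ (Fin n) → ℝ) (hAH : AHarm u)
    (hubdd : ∃ M : ℝ, ∀ x ∈ Ω, |u x| ≤ M)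
    (E : Set (EuclideanSpace ℝ (Fin n))) (hE : E ⊆ frontier Ω) (hE0 : Cpw E = 0)
    (hlim : ∀ x ∈ frontier Ω \ E, Tendsto u (nhdsWithin x Ω) (𝓝 (f x))) :
    ∀ x ∈ Ω, (u x : EReal) = upperPerron Ω ASuper (fun y => (f y : EReal)) x := by
  classical
  intro x hx
  obtain ⟨M, hM⟩ := hubdd
  set hm : EuclideanSpace ℝ (Fin n) → EReal := fun y => if y ∈ E then ⊥ else 0 with hmdef
  set hp : EuclideanSpace ℝ (Fin n) → EReal := fun y => if y ∈ E then ⊤ else 0 with hpdef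
  have hsetm : {y ∈ frontier Ω | hm y ≠ 0} = E := by
    ext y
    simp only [mem_setOf_eq, hmdef]
    constructor
    · rintro ⟨-, hy⟩
      by_contra hyE
      simp [hyE] at hy
    · intro hyE
      exact ⟨hE hyE, by simp [hyE]⟩
  have hsetp : {y ∈ frontier Ω | hp y ≠ 0} = E := by
    ext y
    simp only [mem_setOf_eq, hpdef]
    constructor
    · rintro ⟨-, hy⟩
      by_contra hyE
      simp [hyE] at hy
    · intro hyE
      exact ⟨hE hyE, by simp [hyE]⟩
  obtain ⟨hresm1, hresm2, hinvm⟩ := hres f hf hm (by rw [hsetm]; exact hE0)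
  obtain ⟨hresp1, hresp2, hinvp⟩ := hres f hf hp (by rw [hsetp]; exact hE0)
  have hlimc : ∀ y ∈ frontier Ω \ E,
      Tendsto (fun z => ((u z : EReal))) (nhdsWithin y Ω) (𝓝 ((f y : EReal))) := by
    intro y hy
    exact (continuous_coe_real_ereal.tendsto _).comp (hlim y hy)
  -- u belongs to the upper class of f + hm
  have hmemU : (fun z => (u z : EReal)) ∈ upperClass Ω ASuper (fun y => (f y : EReal) + hm y) := by
    refine ⟨(hAHsupersub u hAH).1, ⟨-M, fun z hz => ?_⟩, fun y hy => ?_⟩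
    · exact EReal.coe_le_coe_iff.mpr (abs_le.mp (hM z hz)).1
    · by_cases hyE : y ∈ E
      · simp only [hmdef, if_pos hyE, EReal.add_bot]
        exact bot_le
      · simp only [hmdef, if_neg hyE, add_zero]
        by_cases hne : (nhdsWithin y Ω).NeBot
        · exact ((hlimc y ⟨hy, hyE⟩).liminf_eq).ge
        · rw [not_neBot.mp hne, liminf_bot]
          exact le_top
  -- u belongs to the lower class of f + hp
  have hmemL : (fun z => (u z : EReal)) ∈ lowerClass Ω ASub (fun y => (f y : EReal) + hp y) := by
    refine ⟨(hAHsupersub u hAH).2, ⟨M, fun z hz => ?_⟩, fun y hy => ?_⟩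
    · exact EReal.coe_le_coe_iff.mpr (abs_le.mp (hM z hz)).2
    · by_cases hyE : y ∈ E
      · simp only [hpdef, if_pos hyE]
        rw [EReal.add_top_of_ne_bot (EReal.coe_ne_bot _)]
        exact le_top
      · simp only [hpdef, if_neg hyE, add_zero]
        by_cases hne : (nhdsWithin y Ω).NeBot
        · exact ((hlimc y ⟨hy, hyE⟩).limsup_eq).le
        · rw [not_neBot.mp hne, limsup_bot]
          exact bot_le
  have h1 : upperPerron Ω ASuper (fun y => (f y : EReal)) x ≤ (u x : EReal) := by
    rw [← hinvm x hx]
    exact iInf₂_le _ hmemU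
  have h2 : (u x : EReal) ≤ upperPerron Ω ASuper (fun y => (f y : EReal)) x := by
    have hle : (u x : EReal) ≤ lowerPerron Ω ASub (fun y => (f y : EReal) + hp y) x :=
      le_iSup₂ (f := fun (v : EuclideanSpace ℝ (Fin n) → EReal)
        (_ : v ∈ lowerClass Ω ASub (fun y => (f y : EReal) + hp y)) => v x) _ hmemL
    calc (u x : EReal) ≤ lowerPerron Ω ASub (fun y => (f y : EReal) + hp y) x := hle
    _ ≤ upperPerron Ω ASuper (fun y => (f y : EReal) + hp y) x := hcomp _ x hx
    _ = upperPerron Ω ASuper (fun y => (f y : EReal)) x := hinvp x hx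
  exact le_antisymm h2 h1
end

section
/- Let f ∈ C(∂Ω) and h : ∂Ω → [-∞,∞] with h = 0 quasieverywhere on ∂Ω. Suppose that for every Lipschitz function g on the closure of Ω, both g and g + h are resolutive and P(g+h) = Pg. Then f and f + h are resolutive and P(f+h) = Pf. -/
open Set Filter Topology

variable {n : ℕ}

/-- `f` is resolutive with respect to the upper and lower Perron operators
`uP`, `lP`: they agree in `Ω` and the common value is `A`-harmonic there. -/
def ResolutiveOp (Ω : Set (EuclideanSpace ℝ (Fin n)))
    (uP lP : (EuclideanSpace ℝ (Fin n) → EReal) → EuclideanSpace ℝ (Fin n) → EReal)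
    (AHarm : (EuclideanSpace ℝ (Fin n) → ℝ) → Prop)
    (f : EuclideanSpace ℝ (Fin n) → EReal) : Prop :=
  (∀ x ∈ Ω, uP f x = lP f x) ∧
  ∃ v : EuclideanSpace ℝ (Fin n) → ℝ, AHarm v ∧ ∀ x ∈ Ω, uP f x = (v x : EReal)

/-!
Approximate `f` uniformly on `∂Ω` by Lipschitz functions `g k`, with `|f - g k| ≤ e k → 0`.
Monotonicity and translation by constants put `P̄ f`, `ŝP f`, `P̄ (f + h)` and `ŝP (f + h)` within
`e k` of `P g k = P (g k + h)`. Hence all four are finite and equal to the uniform limit of the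
`A`-harmonic functions `P g k`, which is `A`-harmonic.
-/

theorem bddBelow_range_add_mul_dist {E ι : Type*} [PseudoMetricSpace E] (p : ι → E) {F : ι → ℝ}
    (hF : BddBelow (range F)) {c : ℝ} (hc : 0 ≤ c) (x : E) :
    BddBelow (range fun i => F i + c * dist x (p i)) := by
  obtain ⟨m, hm⟩ := hF
  refine ⟨m, forall_mem_range.2 fun i => ?_⟩
  have := hm (mem_range_self i)
  have := mul_nonneg hc (dist_nonneg (x := x) (y := p i))
  linarith

theorem lipschitzWith_ciInf_add_mul_dist {E ι : Type*} [PseudoMetricSpace E] [Nonempty ι]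
    (p : ι → E) {F : ι → ℝ} (hF : BddBelow (range F)) (c : NNReal) :
    LipschitzWith c fun x => ⨅ i, F i + c * dist x (p i) := by
  refine LipschitzWith.of_le_add_mul c fun x y => ?_
  rw [← sub_le_iff_le_add]
  refine le_ciInf fun i => ?_
  have hinf := ciInf_le (bddBelow_range_add_mul_dist p hF c.coe_nonneg x) i
  have htri := mul_le_mul_of_nonneg_left (dist_triangle x y (p i)) c.coe_nonneg
  rw [mul_add] at htri
  linarith

theorem IsCompact.exists_lipschitzWith_abs_sub_le {E : Type*} [PseudoMetricSpace E] {K : Set E}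
    (hK : IsCompact K) {f : E → ℝ} (hf : ContinuousOn f K) {ε : ℝ} (hε : 0 < ε) :
    ∃ g : E → ℝ, (∃ L, LipschitzWith L g) ∧ ∀ x ∈ K, |f x - g x| ≤ ε := by
  rcases K.eq_empty_or_nonempty with rfl | hKne
  · exact ⟨0, ⟨0, LipschitzWith.const 0⟩, by simp⟩
  have : Nonempty K := hKne.to_subtype
  obtain ⟨M, hM⟩ := hK.exists_bound_of_continuousOn hf
  have hMabs : ∀ y ∈ K, |f y| ≤ M := hM
  obtain ⟨δ, hδ, hfδ⟩ :=
    Metric.uniformContinuousOn_iff.1 (hK.uniformContinuousOn_of_continuous hf) ε hε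
  -- with this slope, points at distance `≥ δ` cannot push the infimum below `f x - ε`
  set c : NNReal := (2 * M / δ).toNNReal
  have hcδ : 2 * M ≤ c * δ := (div_le_iff₀ hδ).1 (Real.le_coe_toNNReal _)
  have hF : BddBelow (range fun y : K => f y) :=
    ⟨-M, forall_mem_range.2 fun y => (abs_le.1 (hMabs y y.2)).1⟩
  refine ⟨fun x => ⨅ y : K, f y + c * dist x y,
    ⟨c, lipschitzWith_ciInf_add_mul_dist Subtype.val hF c⟩, fun x hx => abs_sub_le_iff.2 ⟨?_, ?_⟩⟩
    <;> beta_reduce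
  · rw [sub_le_comm]
    refine le_ciInf fun y => ?_
    have hc := mul_nonneg c.coe_nonneg (dist_nonneg (x := x) (y := (y : E)))
    rcases lt_or_ge (dist x y) δ with hxy | hxy
    · have := (abs_sub_lt_iff.1 (hfδ x hx y y.2 hxy)).1
      linarith
    · have := mul_le_mul_of_nonneg_left hxy c.coe_nonneg
      have := abs_le.1 (hMabs x hx)
      have := abs_le.1 (hMabs y y.2)
      linarith
  · have := ciInf_le (bddBelow_range_add_mul_dist Subtype.val hF c.coe_nonneg x) ⟨x, hx⟩
    simp only [dist_self, mul_zero, add_zero] at this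
    linarith

theorem EReal.coe_toReal_eq_and_abs_sub_le {z : EReal} {a c : ℝ} (h₁ : z ≤ a + c)
    (h₂ : (a : EReal) ≤ z + c) : (z.toReal : EReal) = z ∧ |z.toReal - a| ≤ c := by
  induction z using EReal.rec with
  | bot => simp at h₂
  | top => exact absurd h₁ (by rw [← EReal.coe_add]; exact not_le.2 (EReal.coe_lt_top _))
  | coe r =>
    norm_cast at h₁ h₂
    rw [EReal.toReal_coe]
    exact ⟨rfl, abs_sub_le_iff.2 ⟨by linarith, by linarith⟩⟩

theorem tendsto_of_forall_abs_sub_le {ι : Type*} {l : Filter ι} {v e : ι → ℝ} {a : ℝ}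
    (he : Tendsto e l (𝓝 0)) (ha : ∀ k, |a - v k| ≤ e k) : Tendsto v l (𝓝 a) :=
  tendsto_iff_norm_sub_tendsto_zero.2 <|
    squeeze_zero (fun _ => norm_nonneg _) (fun k => (abs_sub_comm _ _).trans_le (ha k)) he

theorem eq_of_forall_abs_sub_le {ι : Type*} {l : Filter ι} [l.NeBot] {v e : ι → ℝ} {a b : ℝ}
    (he : Tendsto e l (𝓝 0)) (ha : ∀ k, |a - v k| ≤ e k) (hb : ∀ k, |b - v k| ≤ e k) : a = b :=
  tendsto_nhds_unique (tendsto_of_forall_abs_sub_le he ha) (tendsto_of_forall_abs_sub_le he hb)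

theorem tendstoUniformlyOn_of_forall_abs_sub_le {X ι : Type*} {l : Filter ι} {v : ι → X → ℝ}
    {V : X → ℝ} {s : Set X} {e : ι → ℝ} (he : Tendsto e l (𝓝 0))
    (h : ∀ x ∈ s, ∀ k, |V x - v k x| ≤ e k) : TendstoUniformlyOn v V l s := by
  refine Metric.tendstoUniformlyOn_iff.2 fun ε hε => ?_
  filter_upwards [he.eventually (gt_mem_nhds hε)] with k hk x hx
  exact (h x hx k).trans_lt hk

section Perron

variable {X : Type*} {S Ω : Set X}

def CloseOn (S : Set X) (c : ℝ) (φ ψ : X → EReal) : Prop :=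
  ∀ y ∈ S, φ y ≤ ψ y + c ∧ ψ y ≤ φ y + c

theorem CloseOn.symm {c : ℝ} {φ ψ : X → EReal} (h : CloseOn S c φ ψ) : CloseOn S c ψ φ :=
  fun y hy => (h y hy).symm

theorem closeOn_coe {c : ℝ} {F G : X → ℝ} (h : ∀ y ∈ S, |F y - G y| ≤ c) :
    CloseOn S c (fun y => (F y : EReal)) (fun y => (G y : EReal)) := fun y hy => by
  obtain ⟨h₁, h₂⟩ := abs_sub_le_iff.1 (h y hy)
  exact ⟨(mod_cast (by linarith : F y ≤ G y + c) : (F y : EReal) ≤ G y + c),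
    (mod_cast (by linarith : G y ≤ F y + c) : (G y : EReal) ≤ F y + c)⟩

theorem CloseOn.add_right {c : ℝ} {φ ψ : X → EReal} (h : CloseOn S c φ ψ) (t : X → EReal) :
    CloseOn S c (fun y => φ y + t y) (fun y => ψ y + t y) := fun y hy =>
  ⟨(add_le_add (h y hy).1 le_rfl).trans_eq (add_right_comm _ _ _),
    (add_le_add (h y hy).2 le_rfl).trans_eq (add_right_comm _ _ _)⟩

structure IsPerronPair (S Ω : Set X) (uP lP : (X → EReal) → X → EReal) : Prop where
  upper_mono : ∀ φ ψ : X → EReal, (∀ y ∈ S, φ y ≤ ψ y) → ∀ x ∈ Ω, uP φ x ≤ uP ψ x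
  lower_mono : ∀ φ ψ : X → EReal, (∀ y ∈ S, φ y ≤ ψ y) → ∀ x ∈ Ω, lP φ x ≤ lP ψ x
  upper_add_const : ∀ (φ : X → EReal) (c : ℝ) (x : X), uP (fun y => φ y + c) x = uP φ x + c
  lower_add_const : ∀ (φ : X → EReal) (c : ℝ) (x : X), lP (fun y => φ y + c) x = lP φ x + c
  lower_le_upper : ∀ (φ : X → EReal) (x : X), x ∈ Ω → lP φ x ≤ uP φ x

namespace IsPerronPair

variable {uP lP : (X → EReal) → X → EReal} {φ ψ : X → EReal} {c : ℝ} {x : X}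

theorem upper_le_add (hP : IsPerronPair S Ω uP lP) (h : CloseOn S c φ ψ) (hx : x ∈ Ω) :
    uP φ x ≤ uP ψ x + c :=
  hP.upper_add_const ψ c x ▸ hP.upper_mono _ _ (fun y hy => (h y hy).1) x hx

theorem lower_le_add (hP : IsPerronPair S Ω uP lP) (h : CloseOn S c φ ψ) (hx : x ∈ Ω) :
    lP φ x ≤ lP ψ x + c :=
  hP.lower_add_const ψ c x ▸ hP.lower_mono _ _ (fun y hy => (h y hy).1) x hx

theorem exists_eq_of_closeOn (hP : IsPerronPair S Ω uP lP) (hx : x ∈ Ω) {ψ : ℕ → X → EReal}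
    {v e : ℕ → ℝ} (he : Tendsto e atTop (𝓝 0)) (hψ : ∀ k, uP (ψ k) x = v k ∧ lP (ψ k) x = v k)
    (hclose : ∀ k, CloseOn S (e k) φ (ψ k)) :
    ∃ r : ℝ, (∀ k, |r - v k| ≤ e k) ∧ uP φ x = r ∧ lP φ x = r := by
  have hcomp := hP.lower_le_upper φ x hx
  have hu : ∀ k, uP φ x ≤ v k + e k := fun k => (hψ k).1 ▸ hP.upper_le_add (hclose k) hx
  have hl : ∀ k, (v k : EReal) ≤ lP φ x + e k := fun k =>
    (hψ k).2 ▸ hP.lower_le_add (hclose k).symm hx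
  have hr k := EReal.coe_toReal_eq_and_abs_sub_le (hu k) ((hl k).trans (add_le_add hcomp le_rfl))
  have hs k := EReal.coe_toReal_eq_and_abs_sub_le (hcomp.trans (hu k)) (hl k)
  have hrs := eq_of_forall_abs_sub_le he (fun k => (hr k).2) (fun k => (hs k).2)
  exact ⟨_, fun k => (hr k).2, (hr 0).1.symm, hrs ▸ (hs 0).1.symm⟩

end IsPerronPair

end Perron

theorem resolutiveOp_of_eq {Ω : Set (EuclideanSpace ℝ (Fin n))}
    {uP lP : (EuclideanSpace ℝ (Fin n) → EReal) → EuclideanSpace ℝ (Fin n) → EReal}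
    {AHarm : (EuclideanSpace ℝ (Fin n) → ℝ) → Prop} {f : EuclideanSpace ℝ (Fin n) → EReal}
    {V : EuclideanSpace ℝ (Fin n) → ℝ} (hV : AHarm V)
    (hf : ∀ x ∈ Ω, uP f x = V x ∧ lP f x = V x) : ResolutiveOp Ω uP lP AHarm f :=
  ⟨fun x hx => (hf x hx).1.trans (hf x hx).2.symm, V, hV, fun x hx => (hf x hx).1⟩

theorem stmt_5_general (Ω : Set (EuclideanSpace ℝ (Fin n)))
    (hΩb : Bornology.IsBounded Ω)
    (uP lP : (EuclideanSpace ℝ (Fin n) → EReal) → EuclideanSpace ℝ (Fin n) → EReal)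
    (AHarm : (EuclideanSpace ℝ (Fin n) → ℝ) → Prop)
    -- monotonicity of the Perron operators in the boundary data
    (humono : ∀ f g : EuclideanSpace ℝ (Fin n) → EReal,
      (∀ x ∈ frontier Ω, f x ≤ g x) → ∀ x ∈ Ω, uP f x ≤ uP g x)
    (hlmono : ∀ f g : EuclideanSpace ℝ (Fin n) → EReal,
      (∀ x ∈ frontier Ω, f x ≤ g x) → ∀ x ∈ Ω, lP f x ≤ lP g x)
    -- translation by real constants
    (huconst : ∀ (f : EuclideanSpace ℝ (Fin n) → EReal) (c : ℝ) (x : EuclideanSpace ℝ (Fin n)),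
      uP (fun y => f y + (c : EReal)) x = uP f x + (c : EReal))
    (hlconst : ∀ (f : EuclideanSpace ℝ (Fin n) → EReal) (c : ℝ) (x : EuclideanSpace ℝ (Fin n)),
      lP (fun y => f y + (c : EReal)) x = lP f x + (c : EReal))
    -- comparison principle
    (hcomp : ∀ (f : EuclideanSpace ℝ (Fin n) → EReal) (x : EuclideanSpace ℝ (Fin n)),
      x ∈ Ω → lP f x ≤ uP f x)
    -- a uniform limit on Ω of A-harmonic functions is A-harmonic
    (hAHunif : ∀ (v : ℕ → EuclideanSpace ℝ (Fin n) → ℝ) (vlim : EuclideanSpace ℝ (Fin n) → ℝ),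
      (∀ k, AHarm (v k)) → TendstoUniformlyOn (fun k x => v k x) vlim atTop Ω → AHarm vlim)
    (f : EuclideanSpace ℝ (Fin n) → ℝ) (hf : ContinuousOn f (frontier Ω))
    (h : EuclideanSpace ℝ (Fin n) → EReal)
    -- hypothesis: the result for Lipschitz boundary data
    (hLip : ∀ g : EuclideanSpace ℝ (Fin n) → ℝ,
      (∃ K : NNReal, LipschitzOnWith K g (closure Ω)) →
      ResolutiveOp Ω uP lP AHarm (fun x => (g x : EReal)) ∧
      ResolutiveOp Ω uP lP AHarm (fun x => (g x : EReal) + h x) ∧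
      ∀ x ∈ Ω, uP (fun y => (g y : EReal) + h y) x = uP (fun y => (g y : EReal)) x) :
    ResolutiveOp Ω uP lP AHarm (fun x => (f x : EReal)) ∧
    ResolutiveOp Ω uP lP AHarm (fun x => (f x : EReal) + h x) ∧
    ∀ x ∈ Ω, uP (fun y => (f y : EReal) + h y) x = uP (fun y => (f y : EReal)) x := by
  have hP : IsPerronPair (frontier Ω) Ω uP lP := ⟨humono, hlmono, huconst, hlconst, hcomp⟩
  have hK : IsCompact (frontier Ω) :=
    hΩb.isCompact_closure.of_isClosed_subset isClosed_frontier frontier_subset_closure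
  set e : ℕ → ℝ := fun k => 1 / (k + 1)
  have he : Tendsto e atTop (𝓝 0) := tendsto_one_div_add_atTop_nhds_zero_nat
  choose g hgLip hg using fun k : ℕ =>
    hK.exists_lipschitzWith_abs_sub_le hf (Nat.one_div_pos_of_nat (n := k))
  have hg_res k := hLip (g k) ((hgLip k).imp fun _ hL => hL.lipschitzOnWith)
  choose v hvA hv using fun k => (hg_res k).1.2
  have hlim : ∀ x ∈ Ω, ∃ r : ℝ, (∀ k, |r - v k x| ≤ e k) ∧
      (uP (fun y => (f y : EReal)) x = r ∧ lP (fun y => (f y : EReal)) x = r) ∧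
      (uP (fun y => (f y : EReal) + h y) x = r ∧ lP (fun y => (f y : EReal) + h y) x = r) := by
    intro x hx
    obtain ⟨r, hr, hfr⟩ := hP.exists_eq_of_closeOn hx he
      (fun k => ⟨hv k x hx, (hg_res k).1.1 x hx ▸ hv k x hx⟩) fun k => closeOn_coe (hg k)
    obtain ⟨s, hs, hfhs⟩ := hP.exists_eq_of_closeOn hx he
      (fun k => ⟨(hg_res k).2.2 x hx ▸ hv k x hx,
        (hg_res k).2.1.1 x hx ▸ (hg_res k).2.2 x hx ▸ hv k x hx⟩)
      fun k => (closeOn_coe (hg k)).add_right h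
    obtain rfl := eq_of_forall_abs_sub_le he hr hs
    exact ⟨r, hr, hfr, hfhs⟩
  choose! V hVv hV using hlim
  have hVA : AHarm V := hAHunif v V hvA (tendstoUniformlyOn_of_forall_abs_sub_le he hVv)
  exact ⟨resolutiveOp_of_eq hVA fun x hx => (hV x hx).1,
    resolutiveOp_of_eq hVA fun x hx => (hV x hx).2,
    fun x hx => (hV x hx).2.1.trans (hV x hx).1.1.symm⟩

/-- Theorem 3.8 (reduction from Lipschitz to continuous data): let `f ∈ C(∂Ω)`
and `h = 0` q.e. on `∂Ω`. If every Lipschitz function `g` on `closure Ω`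
satisfies that `g` and `g + h` are resolutive with `P(g+h) = Pg`, then `f` and
`f + h` are resolutive and `P(f+h) = Pf`. The Perron operators are assumed
monotone, translate-by-constant compatible, comparable (`ŝP ≤ P̄`), and a
uniform limit of `A`-harmonic functions is `A`-harmonic. -/
theorem stmt_5 (Ω : Set (EuclideanSpace ℝ (Fin n)))
    (hΩo : IsOpen Ω) (hΩb : Bornology.IsBounded Ω) (hΩne : Ω.Nonempty)
    (uP lP : (EuclideanSpace ℝ (Fin n) → EReal) → EuclideanSpace ℝ (Fin n) → EReal)
    (AHarm : (EuclideanSpace ℝ (Fin n) → ℝ) → Prop)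
    (Cpw : Set (EuclideanSpace ℝ (Fin n)) → ENNReal)
    -- monotonicity of the Perron operators in the boundary data
    (humono : ∀ f g : EuclideanSpace ℝ (Fin n) → EReal,
      (∀ x ∈ frontier Ω, f x ≤ g x) → ∀ x ∈ Ω, uP f x ≤ uP g x)
    (hlmono : ∀ f g : EuclideanSpace ℝ (Fin n) → EReal,
      (∀ x ∈ frontier Ω, f x ≤ g x) → ∀ x ∈ Ω, lP f x ≤ lP g x)
    -- translation by real constants
    (huconst : ∀ (f : EuclideanSpace ℝ (Fin n) → EReal) (c : ℝ) (x : EuclideanSpace ℝ (Fin n)),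
      uP (fun y => f y + (c : EReal)) x = uP f x + (c : EReal))
    (hlconst : ∀ (f : EuclideanSpace ℝ (Fin n) → EReal) (c : ℝ) (x : EuclideanSpace ℝ (Fin n)),
      lP (fun y => f y + (c : EReal)) x = lP f x + (c : EReal))
    -- comparison principle
    (hcomp : ∀ (f : EuclideanSpace ℝ (Fin n) → EReal) (x : EuclideanSpace ℝ (Fin n)),
      x ∈ Ω → lP f x ≤ uP f x)
    -- a uniform limit on Ω of A-harmonic functions is A-harmonic
    (hAHunif : ∀ (v : ℕ → EuclideanSpace ℝ (Fin n) → ℝ) (vlim : EuclideanSpace ℝ (Fin n) → ℝ),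
      (∀ k, AHarm (v k)) → TendstoUniformlyOn (fun k x => v k x) vlim atTop Ω → AHarm vlim)
    (f : EuclideanSpace ℝ (Fin n) → ℝ) (hf : ContinuousOn f (frontier Ω))
    (h : EuclideanSpace ℝ (Fin n) → EReal)
    (hqe : Cpw {x ∈ frontier Ω | h x ≠ 0} = 0)
    -- hypothesis: the result for Lipschitz boundary data
    (hLip : ∀ g : EuclideanSpace ℝ (Fin n) → ℝ,
      (∃ K : NNReal, LipschitzOnWith K g (closure Ω)) →
      ResolutiveOp Ω uP lP AHarm (fun x => (g x : EReal)) ∧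
      ResolutiveOp Ω uP lP AHarm (fun x => (g x : EReal) + h x) ∧
      ∀ x ∈ Ω, uP (fun y => (g y : EReal) + h y) x = uP (fun y => (g y : EReal)) x) :
    ResolutiveOp Ω uP lP AHarm (fun x => (f x : EReal)) ∧
    ResolutiveOp Ω uP lP AHarm (fun x => (f x : EReal) + h x) ∧
    ∀ x ∈ Ω, uP (fun y => (f y : EReal) + h y) x = uP (fun y => (f y : EReal)) x :=
  stmt_5_general Ω hΩb uP lP AHarm humono hlmono huconst hlconst hcomp hAHunif f hf h hLip
end
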